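/- Let d = 2ℓ ≥ 2 be even and k ≥ 2, and let v : ℝ^d → ℝ^d be v(x_1,y_1,…,x_ℓ,y_ℓ) = (−y_1,x_1,…,−y_ℓ,x_ℓ). Let 𝒞 ⊆ F(ℝ^d,k) × F(ℝ^d,k) be the set of pairs (C,C′) of colinear configurations with L_C = L_{C′}. For C = (x_1,…,x_k), C′ = (x′_1,…,x′_k) with (C,C′) ∈ 𝒞, define Γ̄^{C,C′}(t) = (Γ̄^{C,C′}_1(t),…,Γ̄^{C,C′}_k(t)) by Γ̄^{C,C′}_i(t) = x_i + 3·t·i·v(e_C) for 0 ≤ t ≤ 1/3, Γ̄^{C,C′}_i(t) = x_i + i·v(e_C) + (3t−1)(x′_i − x_i) for 1/3 ≤ t ≤ 2/3, and Γ̄^{C,C′}_i(t) = x′_i + i(3−3t)·v(e_C) for 2/3 ≤ t ≤ 1. Then Γ̄^{C,C′}(t) ∈ F(ℝ^d,k) for all t ∈ [0,1], Γ̄^{C,C′}(0) = C, Γ̄^{C,C′}(1) = C′, and the resulting map Γ̄ : 𝒞 → P(F(ℝ^d,k)) is a continuous section of e_2 over 𝒞. -/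

import Mathlib

/-!
Put `e = e_C` and `w = v(e)`. Since `v` is a coordinatewise signed permutation pairing `2m` with
`2m + 1`, it preserves norms and `⟪x, v x⟫ = 0`, so `e, w` are orthogonal unit vectors. For
`(C, C') ∈ 𝒞` write `x_i = x_1 + r_i e` and `x'_i = x_1 + r'_i e` with `r`, `r'` injective; then
at every time `Γ̄_i(t) = x_1 + a_i e + b_i w`, with `a = r` on the first piece, `b_i = i` on the
middle piece and `a = r'` on the last one. So two points of `Γ̄(t)` never coincide. The three
pieces agree at `t = 1/3, 2/3`, and `e_C` depends continuously on `C` because `x_1 ≠ x_2`, which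
gives continuity jointly in `(C, C', t)`.
-/

open unitInterval

noncomputable section

/-- Euclidean space ℝ^d. -/
abbrev E (d : ℕ) : Type := EuclideanSpace ℝ (Fin d)

/-- The ordered configuration space F(ℝ^d, k) of k distinct points in ℝ^d,
viewed as the subspace of (ℝ^d)^k of injective tuples. -/
def Conf (d k : ℕ) : Set (Fin k → E d) := {x | Function.Injective x}

/-- The time i/(n-1) ∈ [0,1] at which the i-th configuration is visited. -/
def eTime (n : ℕ) (i : Fin n) : unitInterval :=
  Set.projIcc 0 1 zero_le_one ((i : ℝ) / ((n : ℝ) - 1))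

/-- The evaluation map e_n : P(X) → X^n,
e_n(γ) = (γ(0), γ(1/(n-1)), …, γ((n-2)/(n-1)), γ(1)). -/
def evalMap {X : Type*} [TopologicalSpace X] (n : ℕ) (γ : C(unitInterval, X)) : Fin n → X :=
  fun i => γ (eTime n i)

/-- `A ⊆ X^n` admits a continuous section of the evaluation map e_n. -/
def HasSec {X : Type*} [TopologicalSpace X] (n : ℕ) (A : Set (Fin n → X)) : Prop :=
  ∃ s : A → C(unitInterval, X), Continuous s ∧ ∀ a : A, evalMap n (s a) = (a : Fin n → X)

/-- The orienting unit vector e_C = (x_2 - x_1)/|x_2 - x_1| of the line L_C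
through x_1 and x_2. -/
def eV {d k : ℕ} (hk : 2 ≤ k) (C : Fin k → E d) : E d :=
  ‖C ⟨1, by omega⟩ - C ⟨0, by omega⟩‖⁻¹ • (C ⟨1, by omega⟩ - C ⟨0, by omega⟩)

/-- The orthogonal projection p_C : ℝ^d → L_C onto the affine line L_C
through x_1 and x_2. -/
def pC {d k : ℕ} (hk : 2 ≤ k) (C : Fin k → E d) (x : E d) : E d :=
  C ⟨0, by omega⟩ + (inner ℝ (x - C ⟨0, by omega⟩) (eV hk C) : ℝ) • eV hk C

/-- c̄p(C) = cardinality of {p_C(x_1),…,p_C(x_k)}. -/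
def cpBar {d k : ℕ} (hk : 2 ≤ k) (C : Fin k → E d) : ℕ :=
  (Set.range fun i => pC hk C (C i)).ncard

/-- The affine line L_C through x_1 and x_2. -/
def lineC {d k : ℕ} (hk : 2 ≤ k) (C : Fin k → E d) : Set (E d) :=
  {y | ∃ r : ℝ, y = C ⟨0, by omega⟩ + r • eV hk C}

/-- C is colinear: all its points lie on L_C. -/
def Colin {d k : ℕ} (hk : 2 ≤ k) (C : Fin k → E d) : Prop :=
  ∀ i : Fin k, C i ∈ lineC hk C

/-- The unit tangent vector field v on S^{d-1} for even d = 2ℓ: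
v(x_1,y_1,…,x_ℓ,y_ℓ) = (-y_1,x_1,…,-y_ℓ,x_ℓ). -/
def vf {d : ℕ} (hd : Even d) (x : E d) : E d :=
  (WithLp.equiv 2 (Fin d → ℝ)).symm fun j =>
    if h : (j : ℕ) % 2 = 0 then -(x ⟨(j : ℕ) + 1, by obtain ⟨r, hr⟩ := hd; omega⟩)
    else x ⟨(j : ℕ) - 1, by omega⟩

/-- The i-th component of the path Γ̄^{C,C'} (the paper index i ∈ {1,…,k}
corresponds to (i:ℕ)+1 for i : Fin k): x_i + 3ti·v(e_C) on [0,1/3];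
x_i + i·v(e_C) + (3t-1)(x'_i - x_i) on [1/3,2/3]; x'_i + i(3-3t)·v(e_C)
on [2/3,1]. -/
def gammaBar {d k : ℕ} (hd : Even d) (hk : 2 ≤ k) (C C' : Fin k → E d)
    (i : Fin k) (t : ℝ) : E d :=
  if t ≤ 1 / 3 then C i + (3 * t * ((i : ℝ) + 1)) • vf hd (eV hk C)
  else if t ≤ 2 / 3 then C i + ((i : ℝ) + 1) • vf hd (eV hk C) + (3 * t - 1) • (C' i - C i)
  else C' i + (((i : ℝ) + 1) * (3 - 3 * t)) • vf hd (eV hk C)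

/-- The set 𝒞 of pairs (C,C') of colinear configurations with L_C = L_{C'}. -/
def Cpairs (d k : ℕ) (hk : 2 ≤ k) : Set ((Fin k → E d) × (Fin k → E d)) :=
  {p | p.1 ∈ Conf d k ∧ p.2 ∈ Conf d k ∧ Colin hk p.1 ∧ Colin hk p.2 ∧
    lineC hk p.1 = lineC hk p.2}

open scoped InnerProductSpace

section vf

variable {d : ℕ} (hd : Even d)

def pairSwap (j : Fin d) : Fin d :=
  if h : (j : ℕ) % 2 = 0 then ⟨j + 1, by obtain ⟨r, hr⟩ := hd; omega⟩ else ⟨j - 1, by omega⟩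

lemma val_pairSwap (j : Fin d) :
    (pairSwap hd j : ℕ) = if (j : ℕ) % 2 = 0 then (j : ℕ) + 1 else (j : ℕ) - 1 := by
  unfold pairSwap
  split_ifs <;> rfl

lemma pairSwap_involutive : Function.Involutive (pairSwap hd) := by
  intro j
  ext
  rw [val_pairSwap, val_pairSwap]
  split_ifs <;> omega

lemma vf_apply (x : E d) (j : Fin d) :
    vf hd x j = (if (j : ℕ) % 2 = 0 then -1 else 1) * x (pairSwap hd j) := by
  unfold pairSwap
  by_cases h : (j : ℕ) % 2 = 0 <;> simp [vf, h]

lemma norm_vf (x : E d) : ‖vf hd x‖ = ‖x‖ := by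
  have hcoord : ∀ j, ‖vf hd x j‖ = ‖x (pairSwap hd j)‖ := fun j => by
    rw [vf_apply, norm_mul]
    split_ifs <;> simp
  simp only [EuclideanSpace.norm_eq, hcoord]
  congr 1
  exact Equiv.sum_comp (pairSwap_involutive hd).toPerm (fun j => ‖x j‖ ^ 2)

lemma inner_self_vf (x : E d) : ⟪x, vf hd x⟫_ℝ = 0 := by
  have hswap : ∀ j, vf hd x (pairSwap hd j) * x (pairSwap hd j) = -(vf hd x j * x j) :=
    fun j => by
      rw [vf_apply, vf_apply, pairSwap_involutive, val_pairSwap]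
      split_ifs <;> first | omega | ring
  have hsum := Equiv.sum_comp (pairSwap_involutive hd).toPerm (fun j => vf hd x j * x j)
  simp only [Function.Involutive.coe_toPerm, hswap, Finset.sum_neg_distrib] at hsum
  rw [PiLp.inner_apply]
  simp only [RCLike.inner_apply, conj_trivial]
  linarith

lemma vf_ne_zero {x : E d} (hx : x ≠ 0) : vf hd x ≠ 0 := by
  rw [← norm_ne_zero_iff, norm_vf]
  exact norm_ne_zero_iff.2 hx

lemma continuous_vf : Continuous (vf hd) := by
  refine (PiLp.continuous_toLp 2 _).comp (continuous_pi fun j => ?_)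
  split_ifs <;> fun_prop

end vf

lemma linearIndependent_pair_of_inner_eq_zero {V : Type*} [NormedAddCommGroup V]
    [InnerProductSpace ℝ V] {e w : V} (he : e ≠ 0) (hw : w ≠ 0) (hew : ⟪e, w⟫_ℝ = 0) :
    LinearIndependent ℝ ![e, w] := by
  refine linearIndependent_of_ne_zero_of_inner_eq_zero (fun i => ?_) fun i j hij => ?_
  · fin_cases i <;> simpa
  · fin_cases i <;> fin_cases j <;> simp_all [real_inner_comm]

lemma injective_add_smul_add_smul {V ι : Type*} [NormedAddCommGroup V] [InnerProductSpace ℝ V]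
    {e w : V} (he : e ≠ 0) (hw : w ≠ 0) (hew : ⟪e, w⟫_ℝ = 0) (c : V) (a b : ι → ℝ)
    (hab : ∀ i j, a i = a j → b i = b j → i = j) :
    Function.Injective fun i => c + a i • e + b i • w := by
  intro i j hij
  simp only [add_assoc, add_right_inj] at hij
  obtain ⟨ha, hb⟩ := (linearIndependent_pair_of_inner_eq_zero he hw hew).eq_of_pair hij
  exact hab i j ha hb

section configuration

variable {d k : ℕ} (hk : 2 ≤ k)

lemma sub_ne_zero_of_mem_conf {C : Fin k → E d} (hC : C ∈ Conf d k) :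
    C ⟨1, by omega⟩ - C ⟨0, by omega⟩ ≠ 0 :=
  sub_ne_zero.2 fun h => by simpa using hC h

lemma eV_ne_zero {C : Fin k → E d} (hC : C ∈ Conf d k) : eV hk C ≠ 0 :=
  smul_ne_zero (inv_ne_zero (norm_ne_zero_iff.2 (sub_ne_zero_of_mem_conf hk hC)))
    (sub_ne_zero_of_mem_conf hk hC)

lemma continuousOn_eV : ContinuousOn (eV hk) (Conf d k) := by
  have hsub : Continuous fun C : Fin k → E d => C ⟨1, by omega⟩ - C ⟨0, by omega⟩ := by fun_prop
  exact (hsub.norm.continuousOn.inv₀ fun C hC =>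
    norm_ne_zero_iff.2 (sub_ne_zero_of_mem_conf hk hC)).smul hsub.continuousOn

end configuration

section gammaBar

variable {d k : ℕ} (hd : Even d) (hk : 2 ≤ k)

lemma gammaBar_zero (C C' : Fin k → E d) (i : Fin k) : gammaBar hd hk C C' i 0 = C i := by
  simp [gammaBar]

lemma gammaBar_one (C C' : Fin k → E d) (i : Fin k) : gammaBar hd hk C C' i 1 = C' i := by
  norm_num [gammaBar]

lemma gammaBar_mem_conf {C C' : Fin k → E d} (hp : (C, C') ∈ Cpairs d k hk) (t : ℝ) :
    (fun i => gammaBar hd hk C C' i t) ∈ Conf d k := by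
  obtain ⟨hC, hC', hcol, hcol', hline⟩ : C ∈ Conf d k ∧ C' ∈ Conf d k ∧ Colin hk C ∧
      Colin hk C' ∧ lineC hk C = lineC hk C' := hp
  choose r hr using hcol
  choose r' hr' using fun i => (hline ▸ hcol' i : C' i ∈ lineC hk C)
  have hr_inj : ∀ i j, r i = r j → i = j := fun i j h => hC (by rw [hr i, hr j, h])
  have hr'_inj : ∀ i j, r' i = r' j → i = j := fun i j h => hC' (by rw [hr' i, hr' j, h])
  have hframe := injective_add_smul_add_smul (eV_ne_zero hk hC) (vf_ne_zero hd (eV_ne_zero hk hC))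
    (inner_self_vf hd _) (ι := Fin k) (C ⟨0, by omega⟩)
  show Function.Injective _
  unfold gammaBar
  split_ifs
  · convert hframe r (fun i => 3 * t * ((i : ℝ) + 1))
      fun i j h _ => hr_inj i j h using 1
    funext i
    rw [hr i]
  · convert hframe (fun i => r i + (3 * t - 1) * (r' i - r i)) (fun i => (i : ℝ) + 1)
      fun i j _ h => Fin.ext (by exact_mod_cast add_right_cancel h) using 1
    funext i
    rw [hr i, hr' i]
    module
  · convert hframe r' (fun i => ((i : ℝ) + 1) * (3 - 3 * t))
      fun i j h _ => hr'_inj i j h using 1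
    funext i
    rw [hr' i]

lemma Continuous.gammaBar {X : Type*} [TopologicalSpace X] {C C' : X → Fin k → E d} {τ : X → ℝ}
    (hC : Continuous C) (hC' : Continuous C') (hτ : Continuous τ) (hconf : ∀ x, C x ∈ Conf d k)
    (i : Fin k) : Continuous fun x => gammaBar hd hk (C x) (C' x) i (τ x) := by
  have hv : Continuous fun x => vf hd (eV hk (C x)) :=
    (continuous_vf hd).comp ((continuousOn_eV hk).comp_continuous hC hconf)
  refine Continuous.if_le (by fun_prop) (Continuous.if_le (by fun_prop) (by fun_prop) hτ
    continuous_const fun x hx => ?_) hτ continuous_const fun x hx => ?_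
  · rw [hx]
    module
  · rw [hx, if_pos (by norm_num)]
    module

def gammaBarMap : C(Cpairs d k hk × I, Conf d k) where
  toFun q := ⟨fun i => gammaBar hd hk q.1.1.1 q.1.1.2 i q.2, gammaBar_mem_conf hd hk q.1.2 q.2⟩
  continuous_toFun := (continuous_pi fun i => Continuous.gammaBar hd hk (by fun_prop) (by fun_prop)
    (by fun_prop) (fun q => q.1.2.1) i).subtype_mk _

end gammaBar

theorem stmt14_general (d k : ℕ) (hd : Even d) (hk : 2 ≤ k) :
    (∀ p ∈ Cpairs d k hk,
      (∀ t ∈ Set.Icc (0 : ℝ) 1, (fun i => gammaBar hd hk p.1 p.2 i t) ∈ Conf d k) ∧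
      (∀ i, gammaBar hd hk p.1 p.2 i 0 = p.1 i) ∧
      (∀ i, gammaBar hd hk p.1 p.2 i 1 = p.2 i)) ∧
    ∃ s : ↥(Cpairs d k hk) → C(unitInterval, ↥(Conf d k)),
      Continuous s ∧
      (∀ p : ↥(Cpairs d k hk), ∀ t : unitInterval, ∀ i : Fin k,
        ((s p t : Fin k → E d) i) = gammaBar hd hk (p : (Fin k → E d) × (Fin k → E d)).1
          (p : (Fin k → E d) × (Fin k → E d)).2 i (t : ℝ)) ∧
      (∀ p : ↥(Cpairs d k hk),
        (s p 0 : Fin k → E d) = (p : (Fin k → E d) × (Fin k → E d)).1 ∧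
        (s p 1 : Fin k → E d) = (p : (Fin k → E d) × (Fin k → E d)).2) := by
  refine ⟨fun p hp => ⟨fun t _ => gammaBar_mem_conf hd hk hp t, gammaBar_zero hd hk p.1 p.2,
    gammaBar_one hd hk p.1 p.2⟩, ?_⟩
  exact ⟨(gammaBarMap hd hk).curry, (gammaBarMap hd hk).curry.continuous, fun _ _ _ => rfl,
    fun p => ⟨funext (gammaBar_zero hd hk p.1.1 p.1.2), funext (gammaBar_one hd hk p.1.1 p.1.2)⟩⟩

/-- For even d = 2ℓ ≥ 2, k ≥ 2 and (C,C') ∈ 𝒞, the path Γ̄^{C,C'}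
is collision-free at every time t ∈ [0,1], runs from C to C', and the resulting
map Γ̄ : 𝒞 → P(F(ℝ^d,k)) is a continuous section of e_2 over 𝒞. -/
theorem stmt14 (d k : ℕ) (hd2 : 2 ≤ d) (hd : Even d) (hk : 2 ≤ k) :
    (∀ p ∈ Cpairs d k hk,
      (∀ t ∈ Set.Icc (0 : ℝ) 1, (fun i => gammaBar hd hk p.1 p.2 i t) ∈ Conf d k) ∧
      (∀ i, gammaBar hd hk p.1 p.2 i 0 = p.1 i) ∧
      (∀ i, gammaBar hd hk p.1 p.2 i 1 = p.2 i)) ∧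
    ∃ s : ↥(Cpairs d k hk) → C(unitInterval, ↥(Conf d k)),
      Continuous s ∧
      (∀ p : ↥(Cpairs d k hk), ∀ t : unitInterval, ∀ i : Fin k,
        ((s p t : Fin k → E d) i) = gammaBar hd hk (p : (Fin k → E d) × (Fin k → E d)).1
          (p : (Fin k → E d) × (Fin k → E d)).2 i (t : ℝ)) ∧
      (∀ p : ↥(Cpairs d k hk),
        (s p 0 : Fin k → E d) = (p : (Fin k → E d) × (Fin k → E d)).1 ∧
        (s p 1 : Fin k → E d) = (p : (Fin k → E d) × (Fin k → E d)).2) :=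
  stmt14_general d k hd hk
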